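/- For every integer L ≥ 4, the following identity of formal power series in q holds: ∑_{n,m ≥ 0} C(m,2)·b₂(L,m,n)·qⁿ = q⁶·[L−2 choose 2]_q · ∏_{k=0}^{L−5}(1 + q^{3+k}), where C(m,2) is the binomial coefficient m choose 2. -/

import Mathlib

/-!
Statement 4: For every integer `L ≥ 4`,
`∑_{n,m ≥ 0} C(m,2) b₂(L,m,n) qⁿ = q⁶ [L−2 choose 2]_q ∏_{k=0}^{L−5}(1 + q^{3+k})`
as formal power series in `q` over `ℚ`, where `b₂(L,m,n)` is the number of partitions of
`n` into distinct parts with largest part at most `L` having exactly `m` cells of hook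
length 2.
-/

/-- `λ'_j`: the number of parts of `π` that are at least `j` (the conjugate partition). -/
def conjPart (π : Multiset ℕ) (j : ℕ) : ℕ := (π.filter (fun p => j ≤ p)).card

/-- `λ_i`: the `i`-th largest part of `π` (1-indexed). -/
def rowPart (π : Multiset ℕ) (i : ℕ) : ℕ :=
  ((Finset.Icc 1 π.sum).filter (fun j => i ≤ conjPart π j)).card

/-- The number of cells of hook length `t` in the Young diagram of `π`:
cells `(i,j)` with `1 ≤ i`, `1 ≤ j ≤ λ_i` and `λ_i + λ'_j − i − j + 1 = t`. -/
def hookCount (π : Multiset ℕ) (t : ℕ) : ℕ :=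
  (((Finset.Icc 1 π.sum) ×ˢ (Finset.Icc 1 π.sum)).filter
    (fun c => c.2 ≤ rowPart π c.1 ∧ rowPart π c.1 + conjPart π c.2 + 1 = t + c.1 + c.2)).card

/-- `b₂(L,m,n)`: the number of partitions of `n` into distinct parts with largest part at
most `L` having exactly `m` cells of hook length 2. -/
def b2Lmn (L m n : ℕ) : ℕ :=
  ((Nat.Partition.distincts n).filter
    (fun π => (∀ p ∈ π.parts, p ≤ L) ∧ hookCount π.parts 2 = m)).card

/-- `(q; q)_N = ∏_{k=0}^{N−1} (1 − q^{k+1})`, as a power series in `q` over `ℚ`. -/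
noncomputable def qPoch (N : ℕ) : PowerSeries ℚ :=
  ∏ k ∈ Finset.range N, (1 - (PowerSeries.X : PowerSeries ℚ) ^ (k + 1))

/-- The Gaussian binomial coefficient `[a choose b]_q`, defined as
`(q;q)_a / ((q;q)_b (q;q)_{a−b})` for `a ≥ b ≥ 0` and `0` otherwise. -/
noncomputable def gauss (a b : ℕ) : PowerSeries ℚ :=
  if b ≤ a then qPoch a * (qPoch b * qPoch (a - b))⁻¹ else 0

/-!
For a partition into distinct parts a cell has hook length 2 exactly when it is the
second-to-last cell of a row whose length `p ≥ 2` is a part while `p - 1` is not; call such a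
part a gap. Identify distinct partitions with parts `≤ L` with subsets `S ⊆ [1, L]` and put
`W_f(L) = ∑_S f(gaps S) q^{ΣS}`. Adjoining `L + 2` to a subset of `[1, L + 1]` creates one new
gap iff `L + 1` is absent, and splitting on that gives
`W_f(L + 2) = (1 + q^{L+2}) W_f(L + 1) + q^{L+2} W_{Δf}(L)` with `Δf(m) = f(m + 1) - f(m)`.
As `Δ C(m,2) = m`, `Δ m = 1` and `Δ 1 = 0`, three nested inductions give closed forms for
`W_1`, `W_m` and finally `W_{C(m,2)}`.
-/

open Finset PowerSeries

lemma le_card_filter_Icc_iff {P : ℕ → Prop} [DecidablePred P] (hP : Antitone P)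
    {n j : ℕ} (hj : 1 ≤ j) (hjn : j ≤ n) : j ≤ #{x ∈ Icc 1 n | P x} ↔ P j := by
  constructor
  · intro hle
    by_contra hPj
    have hsub : {x ∈ Icc 1 n | P x} ⊆ Icc 1 (j - 1) := fun x hx => by
      rw [mem_filter, mem_Icc] at hx
      have : x < j := lt_of_not_ge fun hjx => hPj (hP hjx hx.2)
      rw [mem_Icc]; omega
    have := card_le_card hsub
    rw [Nat.card_Icc] at this
    omega
  · intro hPj
    have hsub : Icc 1 j ⊆ {x ∈ Icc 1 n | P x} := fun x hx => by
      rw [mem_Icc] at hx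
      rw [mem_filter, mem_Icc]
      exact ⟨⟨hx.1, hx.2.trans hjn⟩, hP hx.2 hPj⟩
    simpa using card_le_card hsub

section Hook

variable {π : Multiset ℕ}

lemma conjPart_antitone (π : Multiset ℕ) : Antitone (conjPart π) := fun _ _ h =>
  Multiset.card_le_card (Multiset.monotone_filter_right π fun _ hp => h.trans hp)

lemma conjPart_eq_conjPart_succ_add_count (π : Multiset ℕ) (j : ℕ) :
    conjPart π j = conjPart π (j + 1) + π.count j := by
  have hdisj : π.filter (fun a => j + 1 ≤ a ∧ j = a) = 0 :=
    Multiset.filter_eq_nil.2 fun x _ => by omega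
  rw [conjPart, conjPart, Multiset.count_eq_card_filter_eq, ← Multiset.card_add,
    Multiset.filter_add_filter, hdisj, add_zero]
  congr 1
  exact Multiset.filter_congr fun x _ => by omega

lemma conjPart_le_sum (hpos : ∀ p ∈ π, 1 ≤ p) (j : ℕ) : conjPart π j ≤ π.sum :=
  calc conjPart π j ≤ π.card := Multiset.card_le_card (Multiset.filter_le _ _)
    _ = (π.map fun _ => 1).sum := by simp
    _ ≤ π.sum := by simpa using Multiset.sum_map_le_sum_map _ _ hpos

lemma le_sum_of_le_conjPart {i j : ℕ} (hi : 1 ≤ i) (h : i ≤ conjPart π j) :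
    j ≤ π.sum := by
  obtain ⟨p, hp⟩ := Multiset.card_pos_iff_exists_mem.1 (hi.trans h)
  rw [Multiset.mem_filter] at hp
  exact hp.2.trans (Multiset.le_sum_of_mem hp.1)

lemma le_rowPart_iff {i j : ℕ} (hi : 1 ≤ i) (hj : 1 ≤ j) :
    j ≤ rowPart π i ↔ i ≤ conjPart π j := by
  by_cases hjn : j ≤ π.sum
  · exact le_card_filter_Icc_iff (fun _ _ hab h => h.trans (conjPart_antitone π hab)) hj hjn
  · have hrow : rowPart π i ≤ π.sum := (card_filter_le _ _).trans (by simp)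
    exact iff_of_false (by omega) fun h => hjn (le_sum_of_le_conjPart hi h)

def gapCount (S : Finset ℕ) : ℕ := #{p ∈ S | 2 ≤ p ∧ p - 1 ∉ S}

/-- Arm plus leg is 1; arm 0 with leg 1 would make `j` a repeated part. -/
lemma hook_two_cell_iff (hnd : π.Nodup) {i j : ℕ} (hi : 1 ≤ i) (hj : 1 ≤ j) :
    (j ≤ rowPart π i ∧ rowPart π i + conjPart π j + 1 = 2 + i + j) ↔
      j + 1 ∈ π ∧ j ∉ π ∧ conjPart π j = i := by
  have hc₀ := conjPart_eq_conjPart_succ_add_count π j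
  have hc₁ := conjPart_eq_conjPart_succ_add_count π (j + 1)
  have hle₀ := Multiset.nodup_iff_count_le_one.1 hnd j
  have hle₁ := Multiset.nodup_iff_count_le_one.1 hnd (j + 1)
  have hrow₁ := le_rowPart_iff (π := π) hi (by omega : 1 ≤ j + 1)
  have hrow₂ := le_rowPart_iff (π := π) hi (by omega : 1 ≤ j + 1 + 1)
  rw [← Multiset.count_pos, ← Multiset.count_eq_zero]
  constructor
  · rintro ⟨hle, heq⟩
    have := (le_rowPart_iff hi hj).1 hle
    have := conjPart_antitone π (by omega : j + 1 ≤ j + 1 + 1)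
    omega
  · rintro ⟨hmem, hnmem, hci⟩
    have : rowPart π i = j + 1 := by omega
    omega

lemma hookCount_two_eq_gapCount (hpos : ∀ p ∈ π, 1 ≤ p) (hnd : π.Nodup) :
    hookCount π 2 = gapCount π.toFinset := by
  have hcells : ∀ c ∈ Icc 1 π.sum ×ˢ Icc 1 π.sum,
      (c.2 ≤ rowPart π c.1 ∧ rowPart π c.1 + conjPart π c.2 + 1 = 2 + c.1 + c.2) ↔
        c.2 + 1 ∈ π ∧ c.2 ∉ π ∧ conjPart π c.2 = c.1 := fun c hc => by
    simp only [mem_product, mem_Icc] at hc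
    exact hook_two_cell_iff hnd hc.1.1 hc.2.1
  rw [hookCount, filter_congr hcells, gapCount]
  apply card_nbij' (fun c => c.2 + 1) (fun p => (conjPart π (p - 1), p - 1))
  · intro c hc
    simp only [coe_filter, mem_product, mem_Icc, Set.mem_ofPred_eq, Multiset.mem_toFinset,
      add_tsub_cancel_right] at hc ⊢
    exact ⟨hc.2.1, by omega, hc.2.2.1⟩
  · intro p hp
    simp only [coe_filter, Multiset.mem_toFinset, Set.mem_ofPred_eq] at hp
    obtain ⟨hmem, hp2, hnmem⟩ := hp
    have hp1 : p - 1 + 1 = p := by omega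
    have hcpos : 1 ≤ conjPart π (p - 1) :=
      Multiset.card_pos_iff_exists_mem.2 ⟨p, Multiset.mem_filter.2 ⟨hmem, by omega⟩⟩
    have hpsum := Multiset.le_sum_of_mem hmem
    simp only [coe_filter, mem_product, mem_Icc, Set.mem_ofPred_eq, hp1, and_true]
    exact ⟨⟨⟨hcpos, conjPart_le_sum hpos _⟩, by omega, by omega⟩, hmem, hnmem⟩
  · intro c hc
    simp only [coe_filter, Set.mem_ofPred_eq] at hc
    simp only [add_tsub_cancel_right, hc.2.2.2]
  · intro p hp
    simp only [coe_filter, Set.mem_ofPred_eq] at hp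
    show p - 1 + 1 = p
    omega

end Hook

lemma gapCount_insert {L : ℕ} {t : Finset ℕ} (ht : t ⊆ Icc 1 (L + 1)) :
    gapCount (insert (L + 2) t) = gapCount t + if L + 1 ∈ t then 0 else 1 := by
  have hL : L + 2 ∉ t := fun h => by simpa using ht h
  rw [gapCount, filter_insert, gapCount]
  have hsame :
      {p ∈ t | 2 ≤ p ∧ p - 1 ∉ insert (L + 2) t} = {p ∈ t | 2 ≤ p ∧ p - 1 ∉ t} :=
    filter_congr fun p hp => by
      have := mem_Icc.1 (ht hp)
      rw [mem_insert, not_or]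
      constructor
      · exact fun h => ⟨h.1, h.2.2⟩
      · exact fun h => ⟨h.1, by omega, h.2⟩
  split_ifs with h₁ h₂ h₂ <;> simp_all

section Series

variable {R : Type*} [CommRing R]

noncomputable def gapSeries (f : ℕ → R) (L : ℕ) : R⟦X⟧ :=
  ∑ S ∈ (Icc 1 L).powerset, f (gapCount S) • X ^ (∑ p ∈ S, p)

lemma coeff_gapSeries (f : ℕ → R) (L n : ℕ) :
    coeff n (gapSeries f L) =
      ∑ S ∈ (Icc 1 L).powerset with ∑ p ∈ S, p = n, f (gapCount S) := by
  simp [gapSeries, coeff_X_pow, sum_filter, eq_comm]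

lemma gapSeries_zero (f : ℕ → R) : gapSeries f 0 = C (f 0) := by
  simp [gapSeries, gapCount, smul_eq_C_mul]

lemma gapSeries_sub (f g : ℕ → R) (L : ℕ) :
    gapSeries (fun m => f m - g m) L = gapSeries f L - gapSeries g L := by
  simp only [gapSeries, sub_smul, sum_sub_distrib]

lemma sum_powerset_Icc_succ {M : Type*} [AddCommMonoid M] (h : Finset ℕ → M) (L : ℕ) :
    ∑ t ∈ (Icc 1 (L + 1)).powerset, h t =
      ∑ t ∈ (Icc 1 L).powerset, h t + ∑ t ∈ (Icc 1 L).powerset, h (insert (L + 1) t) := by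
  rw [← insert_Icc_right_eq_Icc_add_one (by omega), sum_powerset_insert (by simp)]

lemma gapSeries_succ (f : ℕ → R) (L : ℕ) :
    gapSeries f (L + 1) = gapSeries f L +
      X ^ (L + 1) *
        ∑ t ∈ (Icc 1 L).powerset, f (gapCount (insert (L + 1) t)) • X ^ (∑ p ∈ t, p) := by
  rw [gapSeries, sum_powerset_Icc_succ, gapSeries, mul_sum]
  congr 1
  refine sum_congr rfl fun t ht => ?_
  rw [sum_insert fun h => by simpa using mem_powerset.1 ht h, pow_add, mul_smul_comm]

lemma gapSeries_one (f : ℕ → R) : gapSeries f 1 = C (f 0) * (1 + X) := by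
  have h : gapCount {1} = 0 := rfl
  rw [gapSeries_succ, gapSeries_zero, Icc_eq_empty (by omega)]
  simp only [powerset_empty, sum_singleton, insert_empty_eq, h, sum_empty, pow_zero,
    smul_eq_C_mul]
  ring

lemma gapSeries_add_two {f g : ℕ → R} (hfg : ∀ m, f (m + 1) - f m = g m) (L : ℕ) :
    gapSeries f (L + 2) =
      (1 + X ^ (L + 2)) * gapSeries f (L + 1) + X ^ (L + 2) * gapSeries g L := by
  have hg : gapSeries g L = gapSeries (fun m => f (m + 1)) L - gapSeries f L := by
    rw [← gapSeries_sub]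
    exact congrArg (gapSeries · L) (funext hfg).symm
  have hinsert :
      ∑ t ∈ (Icc 1 (L + 1)).powerset, f (gapCount (insert (L + 2) t)) • X ^ (∑ p ∈ t, p)
      = gapSeries (fun m => f (m + 1)) L + (gapSeries f (L + 1) - gapSeries f L) := by
    calc _ = ∑ t ∈ (Icc 1 (L + 1)).powerset,
            f (gapCount t + if L + 1 ∈ t then 0 else 1) • (X : R⟦X⟧) ^ (∑ p ∈ t, p) :=
          sum_congr rfl fun t ht => by rw [gapCount_insert (mem_powerset.1 ht)]
      _ = gapSeries (fun m => f (m + 1)) L + ∑ t ∈ (Icc 1 L).powerset,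
            f (gapCount (insert (L + 1) t)) • X ^ (∑ p ∈ insert (L + 1) t, p) := by
          rw [sum_powerset_Icc_succ, gapSeries]
          congr 1
          · refine sum_congr rfl fun t ht => ?_
            rw [if_neg fun h => by simpa using mem_powerset.1 ht h]
          · simp only [mem_insert_self, if_true, add_zero]
      _ = _ := by simp only [gapSeries, sum_powerset_Icc_succ]; abel
  rw [gapSeries_succ f (L + 1), hinsert, hg]
  ring

end Series

lemma tsum_mul_card_filter_eq_sum {ι R : Type*} [Semiring R] [TopologicalSpace R]
    (s : Finset ι) (h : ι → ℕ) (g : ℕ → R) :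
    ∑' m, g m * #{x ∈ s | h x = m} = ∑ x ∈ s, g (h x) := by
  classical
  rw [sum_comp, tsum_eq_sum (s := s.image h)]
  · exact sum_congr rfl fun m _ => by rw [nsmul_eq_mul, Nat.cast_comm]
  · intro m hm
    rw [filter_false_of_mem fun x hx (hxm : h x = m) => hm (hxm ▸ mem_image_of_mem h hx)]
    simp

lemma sum_distincts_eq_sum_powerset {M : Type*} [AddCommMonoid M] (g : Finset ℕ → M)
    (L n : ℕ) :
    ∑ π ∈ Nat.Partition.distincts n with ∀ p ∈ π.parts, p ≤ L, g π.parts.toFinset =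
      ∑ S ∈ (Icc 1 L).powerset with ∑ p ∈ S, p = n, g S := by
  refine sum_bij' (fun π _ => π.parts.toFinset)
    (fun S hS => ⟨S.val, fun hp => (mem_Icc.1 (mem_powerset.1 (mem_filter.1 hS).1 hp)).1,
      (sum_val S).trans (mem_filter.1 hS).2⟩) ?_ ?_ ?_ ?_ (fun _ _ => rfl)
  all_goals intro x hx
  all_goals simp only [mem_filter, mem_powerset, Nat.Partition.distincts, mem_univ, true_and] at hx
  · refine mem_filter.2 ⟨mem_powerset.2 fun p hp => ?_, ?_⟩
    · rw [Multiset.mem_toFinset] at hp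
      exact mem_Icc.2 ⟨x.parts_pos hp, hx.2 p hp⟩
    · exact (sum_val _).symm.trans (by rw [Multiset.toFinset_val, hx.1.dedup, x.parts_sum])
  · simp only [mem_filter, Nat.Partition.distincts, mem_univ, true_and]
    exact ⟨x.nodup, fun p hp => (mem_Icc.1 (hx.1 hp)).2⟩
  · exact Nat.Partition.ext ((Multiset.toFinset_val x.parts).trans hx.1.dedup)
  · exact val_toFinset x

lemma mk_tsum_mul_b2Lmn (f : ℕ → ℚ) (L : ℕ) :
    PowerSeries.mk (fun n => ∑' m, f m * b2Lmn L m n) = gapSeries f L := by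
  ext n
  rw [coeff_mk, coeff_gapSeries, ← sum_distincts_eq_sum_powerset]
  simp only [b2Lmn, ← filter_filter]
  rw [tsum_mul_card_filter_eq_sum]
  refine sum_congr rfl fun π hπ => ?_
  rw [mem_filter, Nat.Partition.distincts, mem_filter] at hπ
  rw [hookCount_two_eq_gapCount (fun p hp => π.parts_pos hp) hπ.1.2]

section ClosedForms

variable {R : Type*} [CommRing R]

lemma prod_range_succ_one_add_X_pow (s t : ℕ) :
    ∏ k ∈ range (t + 1), (1 + (X : R⟦X⟧) ^ (s + k)) =
      (1 + X ^ s) * ∏ k ∈ range t, (1 + X ^ (s + 1 + k)) := by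
  rw [prod_range_succ', add_zero, mul_comm]
  simp only [add_assoc, add_comm 1]

lemma gapSeries_const_one : ∀ L : ℕ,
    gapSeries (fun _ => (1 : R)) L = ∏ k ∈ range L, (1 + X ^ (1 + k))
  | 0 => by simp [gapSeries_zero]
  | 1 => by simp [gapSeries_one]
  | L + 2 => by
    have hzero : gapSeries (fun _ => (0 : R)) L = 0 := by simp [gapSeries]
    rw [gapSeries_add_two (fun _ => sub_self 1), hzero, gapSeries_const_one (L + 1),
      prod_range_succ _ (L + 1)]
    ring

lemma gapSeries_natCast : ∀ L : ℕ,
    gapSeries (fun m => (m : R)) (L + 2) =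
      X ^ 2 * (∑ i ∈ range (L + 1), X ^ i) * ∏ k ∈ range L, (1 + X ^ (2 + k))
  | 0 => by
    rw [gapSeries_add_two (g := fun _ => 1) (fun m => by push_cast; ring), gapSeries_one,
      gapSeries_zero]
    simp
  | L + 1 => by
    have hsucc := geom_sum_succ (x := (X : R⟦X⟧)) (n := L + 1)
    have hsucc' := geom_sum_succ' (x := (X : R⟦X⟧)) (n := L + 1)
    rw [gapSeries_add_two (g := fun _ => 1) (fun m => by push_cast; ring), gapSeries_natCast L,
      gapSeries_const_one, prod_range_succ_one_add_X_pow, prod_range_succ _ L, hsucc]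
    simp only [Nat.reduceAdd]
    linear_combination
      (X ^ 2 * ∏ k ∈ range L, (1 + (X : R⟦X⟧) ^ (2 + k))) * (hsucc - hsucc')

end ClosedForms

lemma one_sub_X_mul_one_sub_X_sq_ne_zero : (1 - X) * (1 - X ^ 2) ≠ (0 : ℚ⟦X⟧) := fun h => by
  simpa using congrArg constantCoeff h

lemma gauss_two_mul (c : ℕ) :
    gauss (c + 2) 2 * ((1 - X) * (1 - X ^ 2)) = (1 - X ^ (c + 1)) * (1 - X ^ (c + 2)) := by
  have hunit : qPoch 2 * qPoch c * (qPoch 2 * qPoch c)⁻¹ = 1 := by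
    refine PowerSeries.mul_inv_cancel _ ?_
    simp [qPoch, map_prod]
  have hsplit : qPoch (c + 2) = qPoch c * ((1 - X ^ (c + 1)) * (1 - X ^ (c + 2))) := by
    simp only [qPoch, prod_range_succ]
    ring
  have hqPoch_two : qPoch 2 = (1 - X) * (1 - X ^ 2) := by
    simp [qPoch, prod_range_succ]
  rw [gauss, if_pos (by omega), Nat.add_sub_cancel, hsplit, ← hqPoch_two]
  linear_combination ((1 - X ^ (c + 1)) * (1 - (X : ℚ⟦X⟧) ^ (c + 2))) * hunit

lemma gauss_two_two : gauss 2 2 = 1 :=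
  mul_right_cancel₀ one_sub_X_mul_one_sub_X_sq_ne_zero (by simpa using gauss_two_mul 0)

lemma gapSeries_choose_two : ∀ L : ℕ,
    gapSeries (fun m => (m.choose 2 : ℚ)) (L + 4) =
      X ^ 6 * gauss (L + 2) 2 * ∏ k ∈ range L, (1 + X ^ (3 + k)) := by
  have hΔ : ∀ m : ℕ, ((m + 1).choose 2 : ℚ) - m.choose 2 = m := fun m => by
    rw [Nat.choose_succ_succ', Nat.choose_one_right]; push_cast; ring
  intro L
  induction L with
  | zero =>
    have hB := gapSeries_natCast (R := ℚ) 0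
    rw [gapSeries_add_two hΔ 2, gapSeries_add_two hΔ 1, gapSeries_add_two hΔ 0]
    simp only [zero_add, Nat.reduceAdd] at hB ⊢
    simp only [gapSeries_one, gapSeries_zero, hB, gauss_two_two, Nat.choose_zero_succ,
      Nat.cast_zero, map_zero, zero_mul, mul_zero, add_zero, zero_add, range_one, range_zero,
      sum_singleton, prod_empty, pow_zero, mul_one]
    ring
  | succ L ih =>
    show gapSeries _ (L + 3 + 2) = _
    rw [gapSeries_add_two hΔ, show L + 3 + 1 = L + 4 from rfl, ih, gapSeries_natCast (L + 1),
      prod_range_succ_one_add_X_pow, prod_range_succ]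
    simp only [Nat.reduceAdd]
    set Φ := ∏ k ∈ range L, (1 + (X : ℚ⟦X⟧) ^ (3 + k))
    have hg₃ := gauss_two_mul (L + 1)
    have hg₂ := gauss_two_mul L
    have hG := geom_sum_mul (X : ℚ⟦X⟧) (L + 1 + 1)
    -- Cleared of the denominators `(1 - q)(1 - q²)` and divided by `q⁶ Φ (1 - q^{L+2})`,
    -- this is `1 - q^{2L+6} = (1 + q^{L+5})(1 - q^{L+1}) + q^{L+1}(1 - q⁴)`.
    apply mul_right_cancel₀ one_sub_X_mul_one_sub_X_sq_ne_zero
    linear_combination (1 + X ^ (L + 5)) * X ^ 6 * Φ * hg₂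
      - X ^ 6 * Φ * (1 + X ^ (L + 3)) * hg₃ - X ^ (L + 7) * (1 + X ^ 2) * Φ * (1 - X ^ 2) * hG

open PowerSeries in
theorem weighted_b2L_gen_fun (L : ℕ) (hL : 4 ≤ L) :
    PowerSeries.mk (fun n => ∑' m : ℕ, (m.choose 2 : ℚ) * b2Lmn L m n) =
      (X : ℚ⟦X⟧) ^ 6 * gauss (L - 2) 2 *
        ∏ k ∈ Finset.range (L - 4), (1 + (X : ℚ⟦X⟧) ^ (3 + k)) := by
  obtain ⟨a, rfl⟩ := Nat.exists_eq_add_of_le' hL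
  rw [mk_tsum_mul_b2Lmn, gapSeries_choose_two]
  rfl
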